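/- arXiv:2009.00966 — 6 statements merged into one kernel-verified Lean document; each statement's English description precedes it below -/
import Mathlib

section
/- If Δ : ℝ≥0 → ℝ is continuous and persistently exciting, i.e., there exist T > 0 and μ > 0 such that ∫_t^{t+T} Δ(s)² ds ≥ μ for all t ≥ 0, then for any γ > 0 the solution x(t) = exp(-γ ∫₀^t Δ(s)² ds) · x₀ of ẋ = -γ Δ(t)² x decays exponentially: there exist C > 0 and ρ > 0 with |x(t)| ≤ C e^{-ρ t} |x₀| for all t ≥ 0. -/
open Filter Real

theorem stmt_1 (Δ : ℝ → ℝ) (hΔ : Continuous Δ) (T μ : ℝ) (hT : 0 < T) (hμ : 0 < μ)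
    (hPE : ∀ t ≥ (0:ℝ), μ ≤ ∫ s in t..(t+T), (Δ s)^2)
    (γ : ℝ) (hγ : 0 < γ) (x₀ : ℝ) :
    ∃ C > (0:ℝ), ∃ ρ > (0:ℝ), ∀ t ≥ (0:ℝ),
      |Real.exp (-γ * ∫ s in (0:ℝ)..t, (Δ s)^2) * x₀| ≤ C * Real.exp (-ρ * t) * |x₀| := by
  have hf : Continuous fun s => (Δ s)^2 := hΔ.pow 2
  have hint : ∀ a b : ℝ, IntervalIntegrable (fun s => (Δ s)^2) MeasureTheory.volume a b :=
    fun a b => hf.intervalIntegrable a b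
  have hstep : ∀ n : ℕ, (n : ℝ) * μ ≤ ∫ s in (0:ℝ)..(n * T), (Δ s)^2 := by
    intro n
    induction n with
    | zero => simp
    | succ n ih =>
      have hadd : (∫ s in (0:ℝ)..((n:ℝ) * T), (Δ s)^2)
          + ∫ s in ((n:ℝ)*T)..((n:ℝ)*T + T), (Δ s)^2
          = ∫ s in (0:ℝ)..(((n:ℕ)+1 : ℝ) * T), (Δ s)^2 := by
        rw [show (((n:ℕ)+1 : ℝ)) * T = (n:ℝ)*T + T by ring]
        exact intervalIntegral.integral_add_adjacent_intervals (hint _ _) (hint _ _)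
      have hpe := hPE ((n:ℝ)*T) (by positivity)
      push_cast
      nlinarith
  refine ⟨Real.exp (γ * μ), Real.exp_pos _, γ * μ / T, by positivity, fun t ht => ?_⟩
  set n : ℕ := ⌊t / T⌋₊ with hn
  have hnT : (n : ℝ) * T ≤ t := by
    rw [hn]
    calc (⌊t / T⌋₊ : ℝ) * T ≤ (t / T) * T := by
          apply mul_le_mul_of_nonneg_right (Nat.floor_le (by positivity)) hT.le
      _ = t := by field_simp
  have hnlb : t / T - 1 ≤ (n : ℝ) := by
    have := Nat.sub_one_lt_floor (t / T)
    linarith [this]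
  have htail : (0:ℝ) ≤ ∫ s in ((n:ℝ)*T)..t, (Δ s)^2 := by
    apply intervalIntegral.integral_nonneg hnT
    intro x _; positivity
  have hmain : (n : ℝ) * μ ≤ ∫ s in (0:ℝ)..t, (Δ s)^2 := by
    have hadd : (∫ s in (0:ℝ)..((n:ℝ) * T), (Δ s)^2)
        + ∫ s in ((n:ℝ)*T)..t, (Δ s)^2 = ∫ s in (0:ℝ)..t, (Δ s)^2 :=
      intervalIntegral.integral_add_adjacent_intervals (hint _ _) (hint _ _)
    linarith [hstep n]
  have hexp : Real.exp (-γ * ∫ s in (0:ℝ)..t, (Δ s)^2)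
      ≤ Real.exp (γ * μ) * Real.exp (-(γ * μ / T) * t) := by
    rw [← Real.exp_add]
    apply Real.exp_le_exp.2
    have h1 : (t / T - 1) * μ ≤ (n:ℝ) * μ := mul_le_mul_of_nonneg_right hnlb hμ.le
    have h2 : -γ * ∫ s in (0:ℝ)..t, (Δ s)^2 ≤ -γ * ((t/T - 1) * μ) := by
      apply mul_le_mul_of_nonpos_left _ (by linarith)
      linarith
    have hT' : T ≠ 0 := hT.ne'
    calc -γ * ∫ s in (0:ℝ)..t, (Δ s)^2 ≤ -γ * ((t/T - 1) * μ) := h2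
      _ = γ * μ + -(γ * μ / T) * t := by field_simp; ring
  rw [abs_mul, abs_of_pos (Real.exp_pos _)]
  apply mul_le_mul_of_nonneg_right _ (abs_nonneg _)
  exact hexp
end

section
/- Cascaded error system convergence: suppose Δ : ℝ≥0 → ℝ is continuous bounded with ∫₀^t Δ(s)² ds → ∞, and x, y : ℝ≥0 → ℝ satisfy ẋ = -γ₁ Δ(t)² x and ẏ = -γ₂ Δ(t)² y - c x(t) with γ₁, γ₂ > 0, c ∈ ℝ. If additionally Δ is persistently exciting, then both x(t) → 0 and y(t) → 0 exponentially. -/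
/-! The first equation integrates explicitly: with `I t = ∫₀ᵗ Δ²`, `x t = x 0 · e^{-γ₁ I t}`.
Variation of constants for the second one gives `y t · e^{γ₂ I t} = y 0 - c x 0 ∫₀ᵗ e^{(γ₂-γ₁) I}`,
so with `γ = min γ₁ γ₂` both errors are at most `(|x 0| + |y 0| + |c x 0| t) e^{-γ I t}`.
Persistent excitation makes `I` grow at least linearly, `I t ≥ μ (t / T - 1)`, and the linear
prefactor is absorbed by halving the resulting exponential rate. -/

open Filter Real MeasureTheory intervalIntegral Set

theorem mul_exp_neg_eq_add_integral_of_hasDerivAt {a g y A : ℝ → ℝ}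
    (hA : ∀ t, HasDerivAt A (a t) t) (hg : Continuous g)
    (hy : ∀ t, HasDerivAt y (a t * y t + g t) t) (t : ℝ) :
    y t * exp (-A t) = y 0 * exp (-A 0) + ∫ s in (0:ℝ)..t, exp (-A s) * g s := by
  have hderiv : ∀ s, HasDerivAt (fun s => y s * exp (-A s)) (exp (-A s) * g s) s := fun s =>
    ((hy s).mul (hA s).neg.exp).congr_deriv (by simp only [Pi.neg_apply]; ring)
  have hA_cont : Continuous A := continuous_iff_continuousAt.2 fun s => (hA s).continuousAt
  rw [integral_eq_sub_of_hasDerivAt (fun s _ => hderiv s)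
    (((hA_cont.neg.rexp).mul hg).intervalIntegrable 0 t)]
  ring

theorem mul_exp_eq_add_integral_of_hasDerivAt {p P g y : ℝ → ℝ} {k : ℝ}
    (hP : ∀ t, HasDerivAt P (p t) t) (hP0 : P 0 = 0) (hg : Continuous g)
    (hy : ∀ t, HasDerivAt y (-k * p t * y t + g t) t) (t : ℝ) :
    y t * exp (k * P t) = y 0 + ∫ s in (0:ℝ)..t, exp (k * P s) * g s := by
  simpa [hP0] using
    mul_exp_neg_eq_add_integral_of_hasDerivAt (fun t => (hP t).const_mul (-k)) hg hy t

theorem eq_mul_exp_neg_of_hasDerivAt {p P x : ℝ → ℝ} {k : ℝ}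
    (hP : ∀ t, HasDerivAt P (p t) t) (hP0 : P 0 = 0)
    (hx : ∀ t, HasDerivAt x (-k * p t * x t) t) (t : ℝ) :
    x t = x 0 * exp (-k * P t) := by
  have h := mul_exp_eq_add_integral_of_hasDerivAt hP hP0 continuous_const (g := 0)
    (fun t => (hx t).congr_deriv (add_zero _).symm) t
  simp only [Pi.zero_apply, mul_zero, intervalIntegral.integral_zero, add_zero] at h
  rw [← h, mul_assoc, ← exp_add, neg_mul, add_neg_cancel, exp_zero, mul_one]

theorem nat_mul_le_integral_of_persistentExcitation {f : ℝ → ℝ} {T μ : ℝ}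
    (hf : ∀ a b, IntervalIntegrable f volume a b) (hT : 0 ≤ T)
    (hPE : ∀ t ≥ (0:ℝ), μ ≤ ∫ s in t..(t+T), f s) (n : ℕ) :
    n * μ ≤ ∫ s in (0:ℝ)..n * T, f s := by
  induction n with
  | zero => simp
  | succ k ih =>
    have hsplit := integral_add_adjacent_intervals (hf 0 (k * T)) (hf (k * T) (k * T + T))
    have hstep := hPE (k * T) (by positivity)
    push_cast
    rw [add_one_mul (k : ℝ) T, ← hsplit]
    linarith

theorem mul_div_sub_one_le_integral_of_persistentExcitation {f : ℝ → ℝ} {T μ t : ℝ}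
    (hf : ∀ a b, IntervalIntegrable f volume a b) (hf0 : 0 ≤ f) (hT : 0 < T) (hμ : 0 ≤ μ)
    (hPE : ∀ t ≥ (0:ℝ), μ ≤ ∫ s in t..(t+T), f s) (ht : 0 ≤ t) :
    μ * (t / T - 1) ≤ ∫ s in (0:ℝ)..t, f s := by
  set n := ⌊t / T⌋₊
  have hnT : n * T ≤ t := (le_div_iff₀ hT).1 (Nat.floor_le (by positivity))
  have hn : t / T - 1 ≤ n := by linarith [Nat.lt_floor_add_one (t / T)]
  calc μ * (t / T - 1) ≤ n * μ := by nlinarith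
    _ ≤ ∫ s in (0:ℝ)..n * T, f s := nat_mul_le_integral_of_persistentExcitation hf hT.le hPE n
    _ ≤ ∫ s in (0:ℝ)..t, f s :=
      integral_mono_interval le_rfl (by positivity) hnT (ae_of_all _ hf0) (hf 0 t)

theorem abs_mul_exp_le_of_cascade {I x y : ℝ → ℝ} {γ γ₁ γ₂ c t : ℝ}
    (hI : Monotone I) (hI0 : I 0 = 0) (hγ₁ : γ ≤ γ₁) (hγ₂ : γ ≤ γ₂)
    (hx : ∀ t, x t = x 0 * exp (-γ₁ * I t))
    (hy : y t * exp (γ₂ * I t) = y 0 + ∫ s in (0:ℝ)..t, exp (γ₂ * I s) * (-c * x s))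
    (ht : 0 ≤ t) :
    |y t| * exp (γ₂ * I t) ≤ |y 0| + |c * x 0| * exp ((γ₂ - γ) * I t) * t := by
  have hforcing : ∀ s ∈ uIoc 0 t,
      ‖exp (γ₂ * I s) * (-c * x s)‖ ≤ |c * x 0| * exp ((γ₂ - γ) * I t) := by
    intro s hs
    rw [uIoc_of_le ht] at hs
    have hIs : 0 ≤ I s := hI0 ▸ hI hs.1.le
    have hexp : exp (γ₂ * I s) * exp (-γ₁ * I s) ≤ exp ((γ₂ - γ) * I t) := by
      rw [← exp_add, exp_le_exp]
      calc γ₂ * I s + -γ₁ * I s ≤ (γ₂ - γ) * I s := by nlinarith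
        _ ≤ (γ₂ - γ) * I t := mul_le_mul_of_nonneg_left (hI hs.2) (by linarith)
    calc ‖exp (γ₂ * I s) * (-c * x s)‖
        = |c * x 0| * (exp (γ₂ * I s) * exp (-γ₁ * I s)) := by
          rw [hx s, norm_eq_abs, abs_mul, abs_exp, abs_mul, abs_neg, abs_mul, abs_mul, abs_exp]
          ring
      _ ≤ |c * x 0| * exp ((γ₂ - γ) * I t) := by gcongr
  have hint := norm_integral_le_of_norm_le_const hforcing
  rw [sub_zero, abs_of_nonneg ht, norm_eq_abs] at hint
  calc |y t| * exp (γ₂ * I t) = |y t * exp (γ₂ * I t)| := by rw [abs_mul, abs_exp]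
    _ ≤ _ := hy ▸ abs_add_le _ _
    _ ≤ _ := by linarith

theorem abs_add_abs_le_of_cascade {I x y : ℝ → ℝ} {γ γ₁ γ₂ c t : ℝ}
    (hI : Monotone I) (hI0 : I 0 = 0) (hγ₁ : γ ≤ γ₁) (hγ₂ : γ ≤ γ₂)
    (hx : ∀ t, x t = x 0 * exp (-γ₁ * I t))
    (hy : y t * exp (γ₂ * I t) = y 0 + ∫ s in (0:ℝ)..t, exp (γ₂ * I s) * (-c * x s))
    (ht : 0 ≤ t) :
    |x t| + |y t| ≤ (|x 0| + |y 0| + |c * x 0| * t) * exp (-γ * I t) := by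
  have hIt : 0 ≤ I t := hI0 ▸ hI ht
  have hxt : |x t| ≤ |x 0| * exp (-γ * I t) := by
    rw [hx t, abs_mul, abs_exp]
    gcongr
  have hdecay : exp (-(γ₂ * I t)) ≤ exp (-γ * I t) := by
    rw [exp_le_exp]; nlinarith
  have hcancel : exp ((γ₂ - γ) * I t) * exp (-(γ₂ * I t)) = exp (-γ * I t) := by
    rw [← exp_add]; ring_nf
  have hyt : |y t| ≤ (|y 0| + |c * x 0| * t) * exp (-γ * I t) :=
    calc |y t| = |y t| * exp (γ₂ * I t) * exp (-(γ₂ * I t)) := by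
          rw [mul_assoc, ← exp_add, add_neg_cancel, exp_zero, mul_one]
      _ ≤ (|y 0| + |c * x 0| * exp ((γ₂ - γ) * I t) * t) * exp (-(γ₂ * I t)) := by
          gcongr
          exact abs_mul_exp_le_of_cascade hI hI0 hγ₁ hγ₂ hx hy ht
      _ = |y 0| * exp (-(γ₂ * I t)) + |c * x 0| * t * exp (-γ * I t) := by
          rw [← hcancel]; ring
      _ ≤ (|y 0| + |c * x 0| * t) * exp (-γ * I t) := by
          nlinarith [abs_nonneg (y 0)]
  linarith

theorem exists_exp_decay_of_le_affine_mul_exp {f : ℝ → ℝ} {A B κ K : ℝ}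
    (hA : 0 ≤ A) (hB : 0 ≤ B) (hκ : 0 < κ)
    (hf : ∀ t ≥ (0:ℝ), f t ≤ (A + B * t) * exp (K - κ * t)) :
    ∃ C > (0:ℝ), ∃ ρ > (0:ℝ), ∀ t ≥ (0:ℝ), f t ≤ C * exp (-ρ * t) := by
  refine ⟨(A + B * (2 / κ)) * exp K + 1, by positivity, κ / 2, by positivity, fun t ht => ?_⟩
  have hlin : t * exp (-(κ / 2) * t) ≤ 2 / κ := by
    have h1 := add_one_le_exp (κ / 2 * t)
    have h2 : exp (-(κ / 2) * t) * exp (κ / 2 * t) = 1 := by rw [← exp_add]; simp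
    rw [le_div_iff₀ hκ]
    nlinarith [exp_pos (-(κ / 2) * t)]
  have hone : exp (-(κ / 2) * t) ≤ 1 := exp_le_one_iff.2 (by nlinarith)
  have hsplit : exp (K - κ * t) = exp K * exp (-(κ / 2) * t) * exp (-(κ / 2) * t) := by
    rw [← exp_add, ← exp_add]; ring_nf
  calc f t ≤ (A + B * t) * exp (K - κ * t) := hf t ht
    _ = (A * exp (-(κ / 2) * t) + B * (t * exp (-(κ / 2) * t))) * exp K
          * exp (-(κ / 2) * t) := by rw [hsplit]; ring
    _ ≤ (A * 1 + B * (2 / κ)) * exp K * exp (-(κ / 2) * t) := by gcongr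
    _ ≤ ((A + B * (2 / κ)) * exp K + 1) * exp (-(κ / 2) * t) := by
        nlinarith [exp_pos (-(κ / 2) * t)]

theorem stmt_8_general (Δ : ℝ → ℝ) (hΔ : Continuous Δ)
    (γ₁ γ₂ c : ℝ) (hγ₁ : 0 < γ₁) (hγ₂ : 0 < γ₂)
    (x y : ℝ → ℝ)
    (hx : ∀ t, HasDerivAt x (-γ₁ * (Δ t)^2 * x t) t)
    (hy : ∀ t, HasDerivAt y (-γ₂ * (Δ t)^2 * y t - c * x t) t)
    (T μ : ℝ) (hT : 0 < T) (hμ : 0 < μ)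
    (hPE : ∀ t ≥ (0:ℝ), μ ≤ ∫ s in t..(t+T), (Δ s)^2) :
    ∃ C > (0:ℝ), ∃ ρ > (0:ℝ), ∀ t ≥ (0:ℝ),
      |x t| + |y t| ≤ C * Real.exp (-ρ * t) := by
  have hΔ2 : Continuous fun s => Δ s ^ 2 := hΔ.pow 2
  set I : ℝ → ℝ := fun t => ∫ s in (0:ℝ)..t, Δ s ^ 2
  have hI : ∀ t, HasDerivAt I (Δ t ^ 2) t := fun t =>
    (hΔ2.integral_hasStrictDerivAt 0 t).hasDerivAt
  have hI0 : I 0 = 0 := integral_same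
  have hx_eq := eq_mul_exp_neg_of_hasDerivAt hI hI0 hx
  have hy_eq := mul_exp_eq_add_integral_of_hasDerivAt hI hI0 (g := fun s => -c * x s)
    (continuous_const.mul (continuous_iff_continuousAt.2 fun t => (hx t).continuousAt))
    fun t => (hy t).congr_deriv (by ring)
  set γ := min γ₁ γ₂
  have hγ : 0 < γ := lt_min hγ₁ hγ₂
  refine exists_exp_decay_of_le_affine_mul_exp (A := |x 0| + |y 0|) (B := |c * x 0|)
    (K := γ * μ) (κ := γ * μ / T) (by positivity) (abs_nonneg _) (by positivity) fun t ht => ?_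
  calc |x t| + |y t| ≤ (|x 0| + |y 0| + |c * x 0| * t) * exp (-γ * I t) :=
        abs_add_abs_le_of_cascade (monotone_of_hasDerivAt_nonneg hI fun t => sq_nonneg (Δ t)) hI0
          (min_le_left _ _) (min_le_right _ _) hx_eq (hy_eq t) ht
    _ ≤ (|x 0| + |y 0| + |c * x 0| * t) * exp (γ * μ - γ * μ / T * t) := by
        have hI_lower : μ * (t / T - 1) ≤ I t :=
          mul_div_sub_one_le_integral_of_persistentExcitation hΔ2.intervalIntegrable
            (fun s => sq_nonneg (Δ s)) hT hμ.le hPE ht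
        gcongr
        have hrate : γ * (μ * (t / T - 1)) = -(γ * μ - γ * μ / T * t) := by ring
        linarith [mul_le_mul_of_nonneg_left hI_lower hγ.le]

theorem stmt_8 (Δ : ℝ → ℝ) (hΔ : Continuous Δ) (M : ℝ) (hbdd : ∀ t, |Δ t| ≤ M)
    (hex : Tendsto (fun t => ∫ s in (0:ℝ)..t, (Δ s)^2) atTop atTop)
    (γ₁ γ₂ c : ℝ) (hγ₁ : 0 < γ₁) (hγ₂ : 0 < γ₂)
    (x y : ℝ → ℝ)
    (hx : ∀ t, HasDerivAt x (-γ₁ * (Δ t)^2 * x t) t)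
    (hy : ∀ t, HasDerivAt y (-γ₂ * (Δ t)^2 * y t - c * x t) t)
    (T μ : ℝ) (hT : 0 < T) (hμ : 0 < μ)
    (hPE : ∀ t ≥ (0:ℝ), μ ≤ ∫ s in t..(t+T), (Δ s)^2) :
    ∃ C > (0:ℝ), ∃ ρ > (0:ℝ), ∀ t ≥ (0:ℝ),
      |x t| + |y t| ≤ C * Real.exp (-ρ * t) :=
  stmt_8_general Δ hΔ γ₁ γ₂ c hγ₁ hγ₂ x y hx hy T μ hT hμ hPE
end

section
/- Swapping lemma identity (first-order filter): let a > 0 and let η, w : ℝ≥0 → ℝ be continuously differentiable with η w locally integrable. Define F[u](t) := a ∫₀^t e^{-a(t-s)} u(s) ds (the zero-initial-state response of a/(p+a)). Then F[η w](t) = w(t) F[η](t) - ∫₀^t e^{-a(t-s)} ẇ(s) F[η](s) ds for all t ≥ 0. -/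
open Filter Real intervalIntegral

noncomputable def filt (a : ℝ) (u : ℝ → ℝ) (t : ℝ) : ℝ :=
  a * ∫ s in (0:ℝ)..t, Real.exp (-a * (t - s)) * u s

theorem stmt_9 (a : ℝ) (ha : 0 < a) (η w w' : ℝ → ℝ)
    (hη : Continuous η) (hw : ∀ t, HasDerivAt w (w' t) t) (hw' : Continuous w') :
    ∀ t ≥ (0:ℝ),
      filt a (fun s => η s * w s) t =
        w t * filt a η t - ∫ s in (0:ℝ)..t, Real.exp (-a * (t - s)) * w' s * filt a η s := by
  intro t ht
  have hcont : Continuous fun s => Real.exp (a * s) * η s :=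
    (Real.continuous_exp.comp (continuous_const.mul continuous_id)).mul hη
  set H : ℝ → ℝ := fun x => ∫ s in (0:ℝ)..x, Real.exp (a * s) * η s with hHdef
  have hHd : ∀ x : ℝ, HasDerivAt H (Real.exp (a * x) * η x) x := fun x =>
    intervalIntegral.integral_hasDerivAt_right (hcont.intervalIntegrable 0 x)
      (hcont.stronglyMeasurableAtFilter _ _) hcont.continuousAt
  have hH0 : H 0 = 0 := intervalIntegral.integral_same
  have hIBP : ∫ s in (0:ℝ)..t, w s * (Real.exp (a * s) * η s)
      = w t * H t - w 0 * H 0 - ∫ s in (0:ℝ)..t, w' s * H s :=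
    intervalIntegral.integral_mul_deriv_eq_deriv_mul
      (fun x _ => hw x) (fun x _ => hHd x)
      (hw'.intervalIntegrable 0 t) (hcont.intervalIntegrable 0 t)
  have hfilt : ∀ (u : ℝ → ℝ) (x : ℝ),
      filt a u x = a * (Real.exp (-a * x) * ∫ s in (0:ℝ)..x, Real.exp (a * s) * u s) := by
    intro u x
    have h1 : ∀ s, Real.exp (-a * (x - s)) * u s
        = Real.exp (-a * x) * (Real.exp (a * s) * u s) := by
      intro s
      rw [← mul_assoc, ← Real.exp_add]
      congr 2
      ring
    simp only [filt]
    rw [intervalIntegral.integral_congr (fun s _ => h1 s),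
      intervalIntegral.integral_const_mul]
  have hLHS : filt a (fun s => η s * w s) t
      = a * (Real.exp (-a * t) * ∫ s in (0:ℝ)..t, w s * (Real.exp (a * s) * η s)) := by
    rw [hfilt]
    congr 2
    exact intervalIntegral.integral_congr (fun s _ => by ring)
  have hInt2 : (∫ s in (0:ℝ)..t, Real.exp (-a * (t - s)) * w' s * filt a η s)
      = a * Real.exp (-a * t) * ∫ s in (0:ℝ)..t, w' s * H s := by
    rw [← intervalIntegral.integral_const_mul]
    refine intervalIntegral.integral_congr (fun s _ => ?_)
    rw [hfilt η s]
    have : Real.exp (-a * (t - s)) * Real.exp (-a * s) = Real.exp (-a * t) := by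
      rw [← Real.exp_add]; congr 1; ring
    calc Real.exp (-a * (t - s)) * w' s * (a * (Real.exp (-a * s) * H s))
        = (Real.exp (-a * (t - s)) * Real.exp (-a * s)) * (a * (w' s * H s)) := by ring
      _ = a * Real.exp (-a * t) * (w' s * H s) := by rw [this]; ring
  rw [hLHS, hInt2, hIBP, hfilt η t, hH0]
  ring
end

section
/- Perturbed scalar gradient flow: let Δ : ℝ≥0 → ℝ be continuous and bounded with ∫₀^t Δ(s)² ds → ∞, let ε : ℝ≥0 → ℝ satisfy |ε(t)| ≤ K e^{-k t} for some K, k > 0, and let x solve ẋ = -γ Δ(t)² x + γ Δ(t) ε(t) with γ > 0. Then x(t) → 0 as t → ∞. -/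
/-!
Variation of constants: with `A` a primitive of the damping `a ≥ 0`, `exp A * x` has derivative
`exp A * b`, so for `T ≤ t` one gets
`|x t| ≤ exp (A T - A t) * |x T| + ∫ s in T..t, |b s|`.
When `A → ∞` the first term dies as `t → ∞`, and when `b` is integrable the second is at most the
tail `∫ s in Ioi T, |b s|`, which is small for large `T`. Here `a = γ Δ²` and `b = γ Δ ε`, which is
integrable because `Δ` is bounded and `ε` decays exponentially.
-/

open Filter Real MeasureTheory Set Topology

section LinearODE

variable {a A b x : ℝ → ℝ}

theorem abs_le_exp_sub_mul_abs_add_integral_abs (hA : ∀ t, HasDerivAt A (a t) t)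
    (ha : ∀ t, 0 ≤ a t) (hx : ∀ t, HasDerivAt x (-a t * x t + b t) t) {T t : ℝ}
    (hTt : T ≤ t) (hb : IntervalIntegrable b volume T t) :
    |x t| ≤ exp (A T - A t) * |x T| + ∫ s in T..t, |b s| := by
  have hAcont : Continuous A := continuous_iff_continuousAt.2 fun t => (hA t).continuousAt
  have hAmono : Monotone A := monotone_of_hasDerivAt_nonneg hA ha
  have hy : ∀ s, HasDerivAt (fun s => exp (A s) * x s) (exp (A s) * b s) s := fun s =>
    (((hA s).exp).mul (hx s)).congr_deriv (by ring)
  have hint : IntervalIntegrable (fun s => exp (A s) * b s) volume T t :=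
    hb.continuousOn_mul (continuous_exp.comp hAcont).continuousOn
  have hftc := intervalIntegral.integral_eq_sub_of_hasDerivAt (fun s _ => hy s) hint
  have hsol : x t = exp (A T - A t) * x T + exp (-A t) * ∫ s in T..t, exp (A s) * b s := by
    rw [hftc, exp_sub, exp_neg]
    field_simp
    ring
  have hforcing : |∫ s in T..t, exp (A s) * b s| ≤ exp (A t) * ∫ s in T..t, |b s| := by
    rw [← norm_eq_abs, ← intervalIntegral.integral_const_mul (exp (A t)) fun s => |b s|]
    refine intervalIntegral.norm_integral_le_of_norm_le hTt
      (Eventually.of_forall fun s hs => ?_) (hb.abs.const_mul _)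
    rw [norm_mul, norm_of_nonneg (exp_pos _).le, norm_eq_abs]
    gcongr
    exact hAmono hs.2
  calc |x t| ≤ exp (A T - A t) * |x T| + exp (-A t) * |∫ s in T..t, exp (A s) * b s| := by
        rw [hsol]
        refine (abs_add_le _ _).trans_eq ?_
        rw [abs_mul, abs_mul, abs_of_pos (exp_pos _), abs_of_pos (exp_pos _)]
    _ ≤ exp (A T - A t) * |x T| + exp (-A t) * (exp (A t) * ∫ s in T..t, |b s|) := by gcongr
    _ = _ := by rw [← mul_assoc, ← exp_add, neg_add_cancel, exp_zero, one_mul]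

theorem tendsto_zero_of_hasDerivAt_neg_mul_add (hA : ∀ t, HasDerivAt A (a t) t)
    (ha : ∀ t, 0 ≤ a t) (hAtop : Tendsto A atTop atTop) {c : ℝ} (hb : IntegrableOn b (Ioi c))
    (hx : ∀ t, HasDerivAt x (-a t * x t + b t) t) :
    Tendsto x atTop (𝓝 0) := by
  refine Metric.tendsto_nhds.2 fun η hη => ?_
  have htail : Tendsto (fun T => ∫ s in Ioi T, |b s|) atTop (𝓝 0) :=
    tendsto_integral_Ioi_zero tendsto_id
  obtain ⟨T, hT, hcT⟩ :=
    ((htail.eventually (gt_mem_nhds (half_pos hη))).and (eventually_ge_atTop c)).exists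
  have hbT : IntegrableOn b (Ioi T) := hb.mono_set (Ioi_subset_Ioi hcT)
  have hdecay : Tendsto (fun t => exp (A T - A t) * |x T|) atTop (𝓝 0) := by
    have := (tendsto_exp_atBot.comp (tendsto_atBot_add_const_left _ (A T)
      (tendsto_neg_atTop_atBot.comp hAtop))).mul_const |x T|
    simpa [sub_eq_add_neg] using this
  filter_upwards [hdecay.eventually (gt_mem_nhds (half_pos hη)), eventually_ge_atTop T]
    with t ht hTt
  rw [dist_zero_right, norm_eq_abs]
  have hbTt : IntervalIntegrable b volume T t :=
    (intervalIntegrable_iff_integrableOn_Ioc_of_le hTt).2 (hbT.mono_set Ioc_subset_Ioi_self)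
  calc |x t| ≤ exp (A T - A t) * |x T| + ∫ s in T..t, |b s| :=
        abs_le_exp_sub_mul_abs_add_integral_abs hA ha hx hTt hbTt
    _ ≤ exp (A T - A t) * |x T| + ∫ s in Ioi T, |b s| := by
        rw [intervalIntegral.integral_of_le hTt]
        exact add_le_add_right (setIntegral_mono_set hbT.abs
          (Eventually.of_forall fun _ => abs_nonneg _) Ioc_subset_Ioi_self.eventuallyLE) _
    _ < η / 2 + η / 2 := add_lt_add ht hT
    _ = η := add_halves η

end LinearODE

theorem stmt_11_general (Δ : ℝ → ℝ) (hΔ : Continuous Δ) (M : ℝ) (hbdd : ∀ t, |Δ t| ≤ M)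
    (hex : Tendsto (fun t => ∫ s in (0:ℝ)..t, (Δ s)^2) atTop atTop)
    (ε : ℝ → ℝ) (K k : ℝ) (hk : 0 < k)
    (hε : ∀ t ≥ (0:ℝ), |ε t| ≤ K * Real.exp (-k * t))
    (γ : ℝ) (hγ : 0 < γ) (x : ℝ → ℝ)
    (hx : ∀ t, HasDerivAt x (-γ * (Δ t)^2 * x t + γ * Δ t * ε t) t) :
    Tendsto x atTop (nhds 0) := by
  have hM : 0 ≤ M := (abs_nonneg _).trans (hbdd 0)
  have hxc : Continuous x := continuous_iff_continuousAt.2 fun t => (hx t).continuousAt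
  have hA : ∀ t, HasDerivAt (fun t => γ * ∫ s in (0:ℝ)..t, Δ s ^ 2) (γ * Δ t ^ 2) t := fun t =>
    ((hΔ.pow 2).integral_hasStrictDerivAt 0 t).hasDerivAt.const_mul γ
  -- `ε` is not assumed measurable; the forcing term is, being `deriv x + γ Δ² x`.
  have hb_eq : (fun t => γ * Δ t * ε t) = fun t => deriv x t + γ * Δ t ^ 2 * x t :=
    funext fun t => by rw [(hx t).deriv]; ring
  have hb : IntegrableOn (fun t => γ * Δ t * ε t) (Ioi 0) := by
    refine Integrable.mono' ((exp_neg_integrableOn_Ioi 0 hk).const_mul (γ * M * K)) ?_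
      (ae_restrict_of_forall_mem measurableSet_Ioi fun t ht => ?_)
    · rw [hb_eq]
      exact ((measurable_deriv x).add ((continuous_const.mul (hΔ.pow 2)).mul hxc).measurable)
        |>.aestronglyMeasurable
    · calc ‖γ * Δ t * ε t‖ = γ * |Δ t| * |ε t| := by
            rw [norm_eq_abs, abs_mul, abs_mul, abs_of_pos hγ]
        _ ≤ γ * M * (K * exp (-k * t)) := by gcongr; exacts [hbdd t, hε t (le_of_lt ht)]
        _ = γ * M * K * exp (-k * t) := by ring
  exact tendsto_zero_of_hasDerivAt_neg_mul_add hA (fun t => by positivity)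
    (hex.const_mul_atTop hγ) hb fun t => (hx t).congr_deriv (by ring)

theorem stmt_11 (Δ : ℝ → ℝ) (hΔ : Continuous Δ) (M : ℝ) (hbdd : ∀ t, |Δ t| ≤ M)
    (hex : Tendsto (fun t => ∫ s in (0:ℝ)..t, (Δ s)^2) atTop atTop)
    (ε : ℝ → ℝ) (K k : ℝ) (hK : 0 < K) (hk : 0 < k)
    (hε : ∀ t ≥ (0:ℝ), |ε t| ≤ K * Real.exp (-k * t))
    (γ : ℝ) (hγ : 0 < γ) (x : ℝ → ℝ)
    (hx : ∀ t, HasDerivAt x (-γ * (Δ t)^2 * x t + γ * Δ t * ε t) t) :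
    Tendsto x atTop (nhds 0) :=
  stmt_11_general Δ hΔ M hbdd hex ε K k hk hε γ hγ x hx
end

section
/- Exponential input-to-state bound for the load-torque/speed error cascade under PE: if Δ_m is continuous, bounded, and persistently exciting, and T̃ solves d T̃/dt = -γ_T Δ_m(t)² T̃ while ω̃ solves d ω̃/dt = -γ_ω Δ_m(t)² ω̃ - (1/J) T̃ with γ_T, γ_ω, J > 0, then there exist C, ρ > 0 such that |T̃(t)| + |ω̃(t)| ≤ C (|T̃(0)| + |ω̃(0)|) e^{-ρ t}. -/
/-!
Let `A t = ∫₀ᵗ Δ_m²`. Persistent excitation makes `A` grow at least linearly,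
`A t - A s ≥ μ (t - s) / T - μ`, so the integrating factors `exp (-γ (A t - A s))` of both scalar
equations are bounded by `exp (γ μ) e^{-r (t - s)}` with `r = min γ_T γ_ω · μ / T`. Hence `T̃` decays
at rate `r`, and by variation of constants `|ω̃ t| ≤ C (|ω̃ 0| + |T̃ 0| t) e^{-r t}`; halving the
rate absorbs the factor `t`.
-/

open Real MeasureTheory

theorem Monotone.mul_sub_le_sub_of_le_add_sub {A : ℝ → ℝ} (hA : Monotone A) {T μ : ℝ}
    (hT : 0 < T) (hμ : 0 ≤ μ) (hinc : ∀ t ≥ (0:ℝ), μ ≤ A (t + T) - A t)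
    {s t : ℝ} (hs : 0 ≤ s) (hst : s ≤ t) :
    μ / T * (t - s) - μ ≤ A t - A s := by
  have hsteps : ∀ n : ℕ, n * μ ≤ A (s + n * T) - A s := by
    intro n
    induction n with
    | zero => simp
    | succ n ih =>
      have := hinc (s + n * T) (by positivity)
      have hstep : s + (n + 1 : ℕ) * T = s + n * T + T := by push_cast; ring
      rw [hstep, Nat.cast_succ]
      linarith
  set n := ⌊(t - s) / T⌋₊
  have hn_le : n * T ≤ t - s :=
    (le_div_iff₀ hT).1 (Nat.floor_le (div_nonneg (by linarith) hT.le))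
  have hn_gt : (t - s) / T - 1 < n := Nat.sub_one_lt_floor _
  calc μ / T * (t - s) - μ = μ * ((t - s) / T - 1) := by ring
    _ ≤ n * μ := by nlinarith
    _ ≤ A (s + n * T) - A s := hsteps n
    _ ≤ A t - A s := by linarith [hA (show s + n * T ≤ t by linarith)]

theorem exp_mul_integral_sub_le_of_le_integral {f : ℝ → ℝ} (hf : Continuous f) (hf0 : 0 ≤ f)
    {T μ : ℝ} (hT : 0 < T) (hμ : 0 ≤ μ) (hPE : ∀ t ≥ (0:ℝ), μ ≤ ∫ x in t..(t + T), f x)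
    {γ r : ℝ} (hγ : 0 ≤ γ) (hr : r ≤ γ * μ / T) {s t : ℝ} (hs : 0 ≤ s) (hst : s ≤ t) :
    exp (γ * (∫ x in (0:ℝ)..s, f x) - γ * ∫ x in (0:ℝ)..t, f x) ≤
      exp (γ * μ) * exp (-r * (t - s)) := by
  set A : ℝ → ℝ := fun t => ∫ x in (0:ℝ)..t, f x
  have hA_mono : Monotone A := fun a b hab => sub_nonneg.1 <| by
    rw [intervalIntegral.integral_interval_sub_left (hf.intervalIntegrable _ _)
      (hf.intervalIntegrable _ _)]
    exact intervalIntegral.integral_nonneg hab fun x _ => hf0 x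
  have hA_inc : ∀ t ≥ (0:ℝ), μ ≤ A (t + T) - A t := fun t ht => by
    simpa only [A, intervalIntegral.integral_interval_sub_left (hf.intervalIntegrable _ _)
      (hf.intervalIntegrable _ _)] using hPE t ht
  rw [← exp_add, exp_le_exp]
  change γ * A s - γ * A t ≤ _
  have hA_st := hA_mono.mul_sub_le_sub_of_le_add_sub hT hμ hA_inc hs hst
  have hr_st : r * (t - s) ≤ γ * μ / T * (t - s) := by gcongr
  have hγA_st : γ * (μ / T * (t - s) - μ) ≤ γ * (A t - A s) := by gcongr
  linarith [show γ * μ / T * (t - s) = γ * (μ / T * (t - s)) by ring]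

theorem eq_exp_sub_mul_add_integral_of_hasDerivAt {a u x B : ℝ → ℝ}
    (hB : ∀ t, HasDerivAt B (a t) t) (hu : Continuous u)
    (hx : ∀ t, HasDerivAt x (-a t * x t + u t) t) (t : ℝ) :
    x t = exp (B 0 - B t) * x 0 + ∫ s in (0:ℝ)..t, exp (B s - B t) * u s := by
  have hBc : Continuous B := continuous_iff_continuousAt.2 fun t => (hB t).continuousAt
  have hderiv : ∀ s, HasDerivAt (fun s => x s * exp (B s)) (exp (B s) * u s) s := fun s =>
    ((hx s).mul (hB s).exp).congr_deriv (by ring)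
  have hFTC := intervalIntegral.integral_eq_sub_of_hasDerivAt (fun s _ => hderiv s)
    ((by fun_prop : Continuous fun s => exp (B s) * u s).intervalIntegrable 0 t)
  simp_rw [exp_sub, div_mul_eq_mul_div, intervalIntegral.integral_div, hFTC]
  field_simp
  ring

theorem abs_le_mul_exp_of_hasDerivAt {a u x B : ℝ → ℝ}
    (hB : ∀ t, HasDerivAt B (a t) t) (hu : Continuous u)
    (hx : ∀ t, HasDerivAt x (-a t * x t + u t) t) {K r L : ℝ}
    (htrans : ∀ s t, 0 ≤ s → s ≤ t → exp (B s - B t) ≤ K * exp (-r * (t - s)))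
    (hu_le : ∀ s, 0 ≤ s → |u s| ≤ L * exp (-r * s)) {t : ℝ} (ht : 0 ≤ t) :
    |x t| ≤ K * (|x 0| + L * t) * exp (-r * t) := by
  have hBc : Continuous B := continuous_iff_continuousAt.2 fun t => (hB t).continuousAt
  have hpoint : ∀ s ∈ Set.Icc 0 t, |exp (B s - B t) * u s| ≤ K * L * exp (-r * t) := by
    rintro s ⟨hs, hst⟩
    have hexp : exp (-r * t) = exp (-r * (t - s)) * exp (-r * s) := by rw [← exp_add]; ring_nf
    rw [abs_mul, abs_of_pos (exp_pos _), hexp]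
    calc exp (B s - B t) * |u s| ≤ K * exp (-r * (t - s)) * (L * exp (-r * s)) :=
          mul_le_mul (htrans s t hs hst) (hu_le s hs) (abs_nonneg _)
            ((exp_pos _).le.trans (htrans s t hs hst))
      _ = _ := by ring
  have hint : ∫ s in (0:ℝ)..t, |exp (B s - B t) * u s| ≤ t * (K * L * exp (-r * t)) := by
    simpa only [intervalIntegral.integral_const, smul_eq_mul, sub_zero] using
      intervalIntegral.integral_mono_on (μ := volume) ht
      ((by fun_prop : Continuous fun s => |exp (B s - B t) * u s|).intervalIntegrable 0 t)
      intervalIntegrable_const hpoint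
  rw [eq_exp_sub_mul_add_integral_of_hasDerivAt hB hu hx t]
  calc |exp (B 0 - B t) * x 0 + ∫ s in (0:ℝ)..t, exp (B s - B t) * u s|
      ≤ exp (B 0 - B t) * |x 0| + ∫ s in (0:ℝ)..t, |exp (B s - B t) * u s| := by
        refine (abs_add_le _ _).trans (add_le_add ?_ ?_)
        · rw [abs_mul, abs_of_pos (exp_pos _)]
        · exact intervalIntegral.abs_integral_le_integral_abs ht
    _ ≤ K * exp (-r * (t - 0)) * |x 0| + t * (K * L * exp (-r * t)) := by
        gcongr
        exact htrans 0 t le_rfl ht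
    _ = K * (|x 0| + L * t) * exp (-r * t) := by ring_nf

theorem add_mul_mul_exp_neg_le {p q r t : ℝ} (hp : 0 ≤ p) (hq : 0 ≤ q) (hr : 0 < r)
    (ht : 0 ≤ t) : (p + q * t) * exp (-r * t) ≤ (p + 2 * q / r) * exp (-(r / 2) * t) := by
  set E := exp (-(r / 2) * t)
  have hE_sq : exp (-r * t) = E * E := by rw [← exp_add]; ring_nf
  have hE_le_one : E ≤ 1 := exp_le_one_iff.2 (by nlinarith)
  have hmul_E : t * E ≤ 2 / r := by
    have hinv : exp (r / 2 * t) * E = 1 := by rw [← exp_add]; ring_nf; exact exp_zero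
    have := add_one_le_exp (r / 2 * t)
    rw [le_div_iff₀ hr]
    nlinarith [exp_pos (-(r / 2) * t)]
  rw [hE_sq]
  have hE : 0 < E := exp_pos _
  calc (p + q * t) * (E * E) = p * E * E + q * (t * E) * E := by ring
    _ ≤ p * E * 1 + q * (2 / r) * E := by gcongr
    _ = (p + 2 * q / r) * E := by ring

theorem add_le_mul_exp_neg_half_of_cascade {a b p q K₁ K₂ c r t : ℝ} (hK₁ : 0 ≤ K₁)
    (hK₂ : 0 ≤ K₂) (hc : 0 ≤ c) (hp : 0 ≤ p) (hq : 0 ≤ q) (hr : 0 < r) (ht : 0 ≤ t)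
    (ha : a ≤ K₁ * p * exp (-r * t)) (hb : b ≤ K₂ * (q + c * (K₁ * p) * t) * exp (-r * t)) :
    a + b ≤ (K₁ + K₂ + 2 * (K₂ * c * K₁) / r) * (p + q) * exp (-(r / 2) * t) := by
  calc a + b ≤ (K₁ * p + K₂ * q + K₂ * c * K₁ * p * t) * exp (-r * t) := by
        linear_combination ha + hb
    _ ≤ (K₁ * p + K₂ * q + 2 * (K₂ * c * K₁ * p) / r) * exp (-(r / 2) * t) :=
        add_mul_mul_exp_neg_le (by positivity) (by positivity) hr ht
    _ ≤ (K₁ + K₂ + 2 * (K₂ * c * K₁) / r) * (p + q) * exp (-(r / 2) * t) := by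
        gcongr ?_ * _
        rw [show 2 * (K₂ * c * K₁ * p) / r = 2 * (K₂ * c * K₁) / r * p by ring]
        nlinarith [(by positivity : 0 ≤ 2 * (K₂ * c * K₁) / r)]

theorem stmt_16_general (Δm : ℝ → ℝ) (hΔ : Continuous Δm)
    (T μ : ℝ) (hT : 0 < T) (hμ : 0 < μ)
    (hPE : ∀ t ≥ (0:ℝ), μ ≤ ∫ s in t..(t+T), (Δm s)^2)
    (γT γω J : ℝ) (hγT : 0 < γT) (hγω : 0 < γω)
    (Ttil ωtil : ℝ → ℝ)
    (hT' : ∀ t, HasDerivAt Ttil (-γT * (Δm t)^2 * Ttil t) t)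
    (hω' : ∀ t, HasDerivAt ωtil (-γω * (Δm t)^2 * ωtil t - (1/J) * Ttil t) t) :
    ∃ C > (0:ℝ), ∃ ρ > (0:ℝ), ∀ t ≥ (0:ℝ),
      |Ttil t| + |ωtil t| ≤ C * (|Ttil 0| + |ωtil 0|) * Real.exp (-ρ * t) := by
  have hsq : Continuous fun s => Δm s ^ 2 := by fun_prop
  have hA : ∀ t, HasDerivAt (fun t => ∫ s in (0:ℝ)..t, Δm s ^ 2) (Δm t ^ 2) t := fun t =>
    intervalIntegral.integral_hasDerivAt_right (hsq.intervalIntegrable 0 t)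
      hsq.aestronglyMeasurable.stronglyMeasurableAtFilter hsq.continuousAt
  set r := min γT γω * μ / T
  have hr : 0 < r := by positivity
  have htrans : ∀ {γ}, 0 < γ → min γT γω ≤ γ → ∀ s t, 0 ≤ s → s ≤ t →
      exp (γ * (∫ x in (0:ℝ)..s, Δm x ^ 2) - γ * ∫ x in (0:ℝ)..t, Δm x ^ 2) ≤
        exp (γ * μ) * exp (-r * (t - s)) :=
    fun hγ hmin s t hs hst => exp_mul_integral_sub_le_of_le_integral hsq
      (fun x => sq_nonneg (Δm x)) hT hμ.le hPE hγ.le (by simp only [r]; gcongr) hs hst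
  have hTbd : ∀ t ≥ (0:ℝ), |Ttil t| ≤ exp (γT * μ) * |Ttil 0| * exp (-r * t) := fun t ht => by
    simpa only [zero_mul, add_zero] using abs_le_mul_exp_of_hasDerivAt (u := 0) (L := 0)
      (fun t => (hA t).const_mul γT) continuous_const
      (fun t => (hT' t).congr_deriv (by simp only [Pi.zero_apply, add_zero]; ring))
      (htrans hγT (min_le_left _ _)) (fun s _ => by simp) ht
  have hTcont : Continuous Ttil := continuous_iff_continuousAt.2 fun t => (hT' t).continuousAt
  have hωbd : ∀ t ≥ (0:ℝ), |ωtil t| ≤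
      exp (γω * μ) * (|ωtil 0| + |1 / J| * (exp (γT * μ) * |Ttil 0|) * t) * exp (-r * t) :=
    fun t ht => abs_le_mul_exp_of_hasDerivAt (u := fun s => -(1 / J) * Ttil s)
      (fun t => (hA t).const_mul γω) (continuous_const.mul hTcont)
      (fun t => (hω' t).congr_deriv (by ring)) (htrans hγω (min_le_right _ _))
      (fun s hs => by
        rw [abs_mul, abs_neg, mul_assoc]
        exact mul_le_mul_of_nonneg_left (hTbd s hs) (abs_nonneg _)) ht
  exact ⟨_, by positivity, r / 2, by positivity, fun t ht =>
    add_le_mul_exp_neg_half_of_cascade (exp_pos _).le (exp_pos _).le (abs_nonneg _)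
      (abs_nonneg _) (abs_nonneg _) hr ht (hTbd t ht) (hωbd t ht)⟩

theorem stmt_16 (Δm : ℝ → ℝ) (hΔ : Continuous Δm) (M : ℝ) (hbdd : ∀ t, |Δm t| ≤ M)
    (T μ : ℝ) (hT : 0 < T) (hμ : 0 < μ)
    (hPE : ∀ t ≥ (0:ℝ), μ ≤ ∫ s in t..(t+T), (Δm s)^2)
    (γT γω J : ℝ) (hγT : 0 < γT) (hγω : 0 < γω) (hJ : 0 < J)
    (Ttil ωtil : ℝ → ℝ)
    (hT' : ∀ t, HasDerivAt Ttil (-γT * (Δm t)^2 * Ttil t) t)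
    (hω' : ∀ t, HasDerivAt ωtil (-γω * (Δm t)^2 * ωtil t - (1/J) * Ttil t) t) :
    ∃ C > (0:ℝ), ∃ ρ > (0:ℝ), ∀ t ≥ (0:ℝ),
      |Ttil t| + |ωtil t| ≤ C * (|Ttil 0| + |ωtil 0|) * Real.exp (-ρ * t) :=
  stmt_16_general Δm hΔ T μ hT hμ hPE γT γω J hγT hγω Ttil ωtil hT' hω'
end

section
/- Adjugate identity used in DREM: for any n×n real matrix A and vectors Ψ, Θ ∈ ℝⁿ with Ψ = A Θ, the k-th component of adj(A) Ψ equals det(A) · Θ_k for every k; moreover if det(A(t))² is not integrable on [0,∞) (for a measurable family A(t)), then for each k the scalar regression ζ_k(t) = det(A(t)) Θ_k carries enough excitation that the gradient estimator θ̂_k' = γ det(A(t)) (ζ_k(t) - det(A(t)) θ̂_k) with constant true Θ_k satisfies θ̂_k(t) → Θ_k. -/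
/-! Since `adj A * A = det A • 1`, the error `e = θ̂ₖ - Θₖ` obeys `e' = -γ det(A)² e`, so
`e t = e 0 * exp (-γ ∫₀ᵗ det(A)²)`, which tends to `0` under the excitation hypothesis. -/

open Matrix Filter Real

theorem Matrix.adjugate_mulVec_mulVec {m R : Type*} [Fintype m] [DecidableEq m] [CommRing R]
    (A : Matrix m m R) (v : m → R) : A.adjugate *ᵥ (A *ᵥ v) = A.det • v := by
  rw [mulVec_mulVec, adjugate_mul, smul_mulVec, one_mulVec]

section LinearDecay

variable {a e : ℝ → ℝ}

theorem eq_mul_exp_neg_integral_of_hasDerivAt (ha : Continuous a)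
    (he : ∀ t, HasDerivAt e (-a t * e t) t) (t : ℝ) :
    e t = e 0 * exp (-∫ s in (0:ℝ)..t, a s) := by
  set F : ℝ → ℝ := fun t => ∫ s in (0:ℝ)..t, a s
  have hF : ∀ t, HasDerivAt F (a t) t := fun t => (ha.integral_hasStrictDerivAt 0 t).hasDerivAt
  have hconst : ∀ t, HasDerivAt (fun t => e t * exp (F t)) 0 t := fun t => by
    refine ((he t).mul (hF t).exp).congr_deriv ?_
    ring
  have h := is_const_of_deriv_eq_zero (fun x => (hconst x).differentiableAt)
    (fun x => (hconst x).deriv) t 0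
  have hF0 : F 0 = 0 := intervalIntegral.integral_same
  simp only [hF0, exp_zero, mul_one] at h
  rw [exp_neg, ← h, _root_.mul_inv_cancel_right₀ (exp_ne_zero _)]

theorem tendsto_zero_of_hasDerivAt_neg_mul (ha : Continuous a)
    (he : ∀ t, HasDerivAt e (-a t * e t) t)
    (hexc : Tendsto (fun t => ∫ s in (0:ℝ)..t, a s) atTop atTop) :
    Tendsto e atTop (nhds 0) := by
  have hexp : Tendsto (fun t => exp (-∫ s in (0:ℝ)..t, a s)) atTop (nhds 0) :=
    tendsto_exp_atBot.comp (tendsto_neg_atTop_atBot.comp hexc)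
  simpa [← eq_mul_exp_neg_integral_of_hasDerivAt ha he] using hexp.const_mul (e 0)

end LinearDecay

theorem stmt_17 (n : ℕ) (A : ℝ → Matrix (Fin n) (Fin n) ℝ) (hA : Continuous A)
    (Θ : Fin n → ℝ) (Ψ : ℝ → Fin n → ℝ) (hΨ : ∀ t, Ψ t = (A t).mulVec Θ) :
    (∀ t, ∀ k : Fin n, ((A t).adjugate.mulVec (Ψ t)) k = (A t).det * Θ k) ∧
    (Tendsto (fun t => ∫ s in (0:ℝ)..t, ((A s).det)^2) atTop atTop →
      ∀ γ > (0:ℝ), ∀ k : Fin n, ∀ θhat : ℝ → ℝ,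
        (∀ t, HasDerivAt θhat
          (γ * (A t).det * (((A t).adjugate.mulVec (Ψ t)) k - (A t).det * θhat t)) t) →
        Tendsto θhat atTop (nhds (Θ k))) := by
  have hadj : ∀ t, ∀ k : Fin n, ((A t).adjugate.mulVec (Ψ t)) k = (A t).det * Θ k := fun t k => by
    rw [hΨ t, adjugate_mulVec_mulVec, Pi.smul_apply, smul_eq_mul]
  refine ⟨hadj, fun hexc γ hγ k θhat hθhat => ?_⟩
  have herr : ∀ t, HasDerivAt (fun t => θhat t - Θ k)
      (-(γ * (A t).det ^ 2) * (θhat t - Θ k)) t := fun t => by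
    refine ((hθhat t).sub_const (Θ k)).congr_deriv ?_
    rw [hadj]
    ring
  have hgain : Tendsto (fun t => ∫ s in (0:ℝ)..t, γ * (A s).det ^ 2) atTop atTop := by
    simpa only [intervalIntegral.integral_const_mul] using hexc.const_mul_atTop hγ
  have hdecay := tendsto_zero_of_hasDerivAt_neg_mul
    (continuous_const.mul ((hA.matrix_det).pow 2)) herr hgain
  simpa using hdecay.add_const (Θ k)
end
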